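/- (Eichler's criterion) Let L' be an even lattice and L = U² ⊕ L'. Let v, w ∈ L be primitive elements such that (v,v) = (w,w) and [v/div(v)] = [w/div(w)] in the discriminant group A_L. Then there exists an isometry g ∈ S̃O^+(L), i.e. of determinant 1, preserving the orientation of the positive cone, and acting trivially on A_L, such that g(v) = w. -/

import Mathlib

open Matrix

/-- The ℝ-bilinear extension of the integral bilinear form with Gram matrix `M`. -/
def bilinR {ι : Type*} [Fintype ι] (M : Matrix ι ι ℤ) (x y : ι → ℝ) : ℝ :=
  x ⬝ᵥ ((M.map (Int.cast : ℤ → ℝ)) *ᵥ y)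

/-- `w` is a tuple of vectors of `L ⊗ ℝ` spanning a maximal positive definite subspace:
its Gram matrix is positive definite and no longer tuple has positive definite Gram matrix. -/
def IsMaxPosTuple {ι : Type*} [Fintype ι] (M : Matrix ι ι ℤ) {k : ℕ}
    (w : Fin k → ι → ℝ) : Prop :=
  (Matrix.of fun i j => bilinR M (w i) (w j)).PosDef ∧
    ∀ w' : Fin (k + 1) → ι → ℝ,
      ¬ (Matrix.of fun i j => bilinR M (w' i) (w' j)).PosDef

/-- `g` preserves the orientation of the positive cone of the lattice with Gram matrix `M`:
for every basis `w` of a maximal positive definite subspace `W` of `L ⊗ ℝ`, the determinant of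
the matrix `(B(wᵢ, g wⱼ))` (which equals, up to the positive factor `det (Gram w)`, the
determinant of the orthogonal projection of `g|_W` back to `W`) is positive. -/
def OrientPres {ι : Type*} [Fintype ι] (M : Matrix ι ι ℤ) (g : Matrix ι ι ℤ) : Prop :=
  ∀ (k : ℕ) (w : Fin k → ι → ℝ), IsMaxPosTuple M w →
    0 < (Matrix.of fun i j : Fin k =>
          bilinR M (w i) ((g.map (Int.cast : ℤ → ℝ)) *ᵥ w j)).det

/-- `g` is an isometry of the lattice with Gram matrix `M`. -/
def IsIsometry {ι : Type*} [Fintype ι] (M : Matrix ι ι ℤ) (g : Matrix ι ι ℤ) : Prop :=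
  gᵀ * M * g = M

/-- A vector of a lattice is primitive if it is divisible only by units. -/
def IsPrimitiveVec {ι : Type*} (l : ι → ℤ) : Prop :=
  ∀ (c : ℤ) (x : ι → ℤ), l = c • x → IsUnit c

/-- The ℚ-bilinear extension of the bilinear form with Gram matrix `M`. -/
def bilinQ {ι : Type*} [Fintype ι] (M : Matrix ι ι ℤ) (x y : ι → ℚ) : ℚ :=
  x ⬝ᵥ ((M.map (Int.cast : ℤ → ℚ)) *ᵥ y)

/-- The canonical inclusion `ℤ^ι → ℚ^ι`. -/
def castVec {ι : Type*} (v : ι → ℤ) : ι → ℚ := fun i => (v i : ℚ)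

/-- The Gram matrix of `U² = U ⊕ U` in the standard basis `e₁, f₁, e₂, f₂`. -/
def U2G : Matrix (Fin 4) (Fin 4) ℤ :=
  !![0,1,0,0;
     1,0,0,0;
     0,0,0,1;
     0,0,1,0]

/-!
The Eichler transvections `E(e, a) : x ↦ x + (e, x) a - ((a, x) + (a, a)/2 · (e, x)) e`, for `e`
isotropic and `a ⊥ e`, generate a group inside `S̃O⁺(L)`. Each `E(e, a)` is an isometry;
`E(e, a) - 1 = U V` with `V U` a nilpotent `2 × 2` matrix, so its determinant is `1`;
`E(e, a) x - x` is an integral combination of `e` and `a` whenever `x ∈ L^∨`; and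
`t ↦ E(e, t a)` is a path of real isometries from `1`, along which the projection of `g W` back
to a maximal positive definite `W` never degenerates, so the orientation cannot flip.

On `L = U² ⊕ L'` the transvections built from the two hyperbolic planes act on the `U²`-part,
viewed as a `2 × 2` integral matrix, by elementary row and column operations. Smith normal form
and three more transvections bring any `v` of divisibility `d` to `d e₂ + B f₂ + (z mod d)`,
where `z` is the `L'`-part of `v`. For primitive `v`, `w` with the same class in `A_L` the
divisibilities agree and so do the `L'`-parts modulo `d`; equal norms then force equal `B`.
-/

section Forms

variable {R : Type*} [CommRing R] {ι : Type*} [Fintype ι]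

lemma Matrix.IsSymm.dotProduct_mulVec_comm {M : Matrix ι ι R} (hM : M.IsSymm) (x y : ι → R) :
    x ⬝ᵥ (M *ᵥ y) = y ⬝ᵥ (M *ᵥ x) := by
  rw [dotProduct_mulVec, ← mulVec_transpose, hM.eq, dotProduct_comm]

lemma Matrix.dotProduct_transpose_mul_mul_mulVec (g M : Matrix ι ι R) (x y : ι → R) :
    x ⬝ᵥ ((gᵀ * M * g) *ᵥ y) = (g *ᵥ x) ⬝ᵥ (M *ᵥ (g *ᵥ y)) := by
  rw [← mulVec_mulVec, ← mulVec_mulVec, dotProduct_mulVec, vecMul_transpose]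

lemma Matrix.transpose_mul_mul_eq_of_dotProduct {g M : Matrix ι ι R}
    (h : ∀ x y, (g *ᵥ x) ⬝ᵥ (M *ᵥ (g *ᵥ y)) = x ⬝ᵥ (M *ᵥ y)) : gᵀ * M * g = M :=
  ext_iff_mulVec.2 fun y => dotProduct_eq _ _ fun x => by
    rw [dotProduct_comm, dotProduct_transpose_mul_mul_mulVec, h, dotProduct_comm]

lemma RingHom.map_dotProduct_mulVec {S : Type*} [CommRing S] (f : R →+* S) (M : Matrix ι ι R)
    (x y : ι → R) : f (x ⬝ᵥ (M *ᵥ y)) = (f ∘ x) ⬝ᵥ (M.map f *ᵥ (f ∘ y)) := by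
  rw [RingHom.map_dotProduct]
  congr 1
  exact funext (RingHom.map_mulVec f M y)

end Forms

section EichlerTransvection

variable {R : Type*} [CommRing R] {ι : Type*} [Fintype ι] [DecidableEq ι]

/-- `q` stands for `(a, a) / 2`; it is a separate argument because `2` need not be invertible
in `R`. -/
def eichlerTransvection (M : Matrix ι ι R) (e a : ι → R) (q : R) : Matrix ι ι R :=
  1 + vecMulVec a (M *ᵥ e) - vecMulVec e (M *ᵥ a) - q • vecMulVec e (M *ᵥ e)

variable {M : Matrix ι ι R} {e a : ι → R} {q : R}

lemma eichlerTransvection_mulVec (hM : M.IsSymm) (x : ι → R) :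
    eichlerTransvection M e a q *ᵥ x =
      x + (e ⬝ᵥ (M *ᵥ x)) • a - (a ⬝ᵥ (M *ᵥ x) + q * e ⬝ᵥ (M *ᵥ x)) • e := by
  simp only [eichlerTransvection, sub_mulVec, add_mulVec, one_mulVec, smul_mulVec,
    vecMulVec_mulVec, op_smul_eq_smul]
  rw [dotProduct_comm (M *ᵥ a), dotProduct_comm (M *ᵥ e), hM.dotProduct_mulVec_comm x,
    hM.dotProduct_mulVec_comm x]
  module

lemma eichlerTransvection_zero : eichlerTransvection M e 0 0 = 1 := by
  simp [eichlerTransvection]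

lemma map_eichlerTransvection {S : Type*} [CommRing S] (f : R →+* S) (M : Matrix ι ι R)
    (e a : ι → R) (q : R) :
    (eichlerTransvection M e a q).map f = eichlerTransvection (M.map f) (f ∘ e) (f ∘ a) (f q) := by
  ext i j
  simp [eichlerTransvection, vecMulVec_apply, RingHom.map_mulVec, one_apply, apply_ite f]

variable (hM : M.IsSymm) (he : e ⬝ᵥ (M *ᵥ e) = 0) (hea : e ⬝ᵥ (M *ᵥ a) = 0)
include hM he hea

lemma transpose_mul_mul_eichlerTransvection (ha : a ⬝ᵥ (M *ᵥ a) = 2 * q) :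
    (eichlerTransvection M e a q)ᵀ * M * eichlerTransvection M e a q = M := by
  refine transpose_mul_mul_eq_of_dotProduct fun x y => ?_
  have hae : a ⬝ᵥ (M *ᵥ e) = 0 := by rw [hM.dotProduct_mulVec_comm, hea]
  simp only [eichlerTransvection_mulVec hM, dotProduct_add, dotProduct_sub, add_dotProduct,
    sub_dotProduct, mulVec_add, mulVec_sub, mulVec_smul, dotProduct_smul, smul_dotProduct,
    smul_eq_mul, he, hea, hae, ha]
  rw [hM.dotProduct_mulVec_comm x a, hM.dotProduct_mulVec_comm x e]
  ring

lemma eichlerTransvection_mul_neg (ha : a ⬝ᵥ (M *ᵥ a) = 2 * q) :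
    eichlerTransvection M e a q * eichlerTransvection M e (-a) q = 1 := by
  have hae : a ⬝ᵥ (M *ᵥ e) = 0 := by rw [hM.dotProduct_mulVec_comm, hea]
  refine ext_iff_mulVec.2 fun x => ?_
  simp only [← mulVec_mulVec, one_mulVec, eichlerTransvection_mulVec hM, dotProduct_add,
    dotProduct_sub, mulVec_add, mulVec_sub, mulVec_smul, mulVec_neg, dotProduct_smul,
    dotProduct_neg, neg_dotProduct, smul_eq_mul, he, hea, hae, ha]
  module

/-- `eichlerTransvection M e a q - 1` factors through `R²`, where it becomes nilpotent. -/
lemma det_eichlerTransvection : (eichlerTransvection M e a q).det = 1 := by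
  have hae : a ⬝ᵥ (M *ᵥ e) = 0 := by rw [hM.dotProduct_mulVec_comm, hea]
  let U : Matrix ι (Fin 2) R := (of ![a, e])ᵀ
  let V : Matrix (Fin 2) ι R := of ![M *ᵥ e, -(M *ᵥ a) - q • (M *ᵥ e)]
  have hUV : eichlerTransvection M e a q = 1 + U * V := by
    ext i j
    simp [eichlerTransvection, U, V, mul_apply, Fin.sum_univ_two, vecMulVec_apply]
    ring
  have hVU : V * U = of ![![0, 0], ![-(a ⬝ᵥ (M *ᵥ a)), 0]] := by
    have hV : ∀ k, V k = ![M *ᵥ e, -(M *ᵥ a) - q • (M *ᵥ e)] k := fun _ => rfl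
    have hU : ∀ k, (fun i => U i k) = ![a, e] k := fun _ => rfl
    ext i j
    rw [mul_apply', hU]
    simp only [hV]
    fin_cases i <;> fin_cases j <;>
      simp [dotProduct_comm (M *ᵥ _), he, hea, hae, sub_dotProduct]
  rw [hUV, det_one_add_mul_comm, hVU, det_fin_two]
  simp

end EichlerTransvection

section Isometries

variable {R : Type*} [CommRing R] {ι : Type*} [Fintype ι] [DecidableEq ι]

def isometrySubmonoid (M : Matrix ι ι R) : Submonoid (Matrix ι ι R) where
  carrier := {g | gᵀ * M * g = M}
  mul_mem' {g h} hg hh := by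
    calc (g * h)ᵀ * M * (g * h) = hᵀ * (gᵀ * M * g) * h := by
          simp only [transpose_mul, Matrix.mul_assoc]
      _ = M := by rw [hg, hh]
  one_mem' := by simp

end Isometries

section EichlerSubmonoid

variable {R : Type*} [CommRing R] {ι : Type*} [Fintype ι] [DecidableEq ι]

def eichlerTransvections (M : Matrix ι ι R) : Set (Matrix ι ι R) :=
  {g | ∃ e a q, e ⬝ᵥ (M *ᵥ e) = 0 ∧ e ⬝ᵥ (M *ᵥ a) = 0 ∧ a ⬝ᵥ (M *ᵥ a) = 2 * q ∧
    eichlerTransvection M e a q = g}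

def eichlerSubmonoid (M : Matrix ι ι R) : Submonoid (Matrix ι ι R) :=
  Submonoid.closure (eichlerTransvections M)

variable {M g : Matrix ι ι R}

lemma eichlerSubmonoid_le_isometrySubmonoid (hM : M.IsSymm) :
    eichlerSubmonoid M ≤ isometrySubmonoid M :=
  Submonoid.closure_le.2 fun _ ⟨_, _, _, he, hea, ha, hg⟩ =>
    hg ▸ transpose_mul_mul_eichlerTransvection hM he hea ha

lemma det_of_mem_eichlerSubmonoid (hM : M.IsSymm) (hg : g ∈ eichlerSubmonoid M) : g.det = 1 := by
  induction hg using Submonoid.closure_induction with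
  | mem g hg =>
    obtain ⟨e, a, q, he, hea, -, rfl⟩ := hg
    exact det_eichlerTransvection hM he hea
  | one => simp
  | mul g h _ _ hg hh => rw [det_mul, hg, hh, one_mul]

lemma exists_mul_eq_one_of_mem_eichlerSubmonoid (hM : M.IsSymm) (hg : g ∈ eichlerSubmonoid M) :
    ∃ h ∈ eichlerSubmonoid M, h * g = 1 := by
  induction hg using Submonoid.closure_induction with
  | mem g hg =>
    obtain ⟨e, a, q, he, hea, ha, rfl⟩ := hg
    refine ⟨eichlerTransvection M e (-a) q,
      Submonoid.subset_closure ⟨e, -a, q, he, ?_, ?_, rfl⟩, ?_⟩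
    · simp [mulVec_neg, hea]
    · simp [mulVec_neg, ha]
    · simpa using eichlerTransvection_mul_neg hM he (a := -a) (by simp [mulVec_neg, hea])
        (by simp [mulVec_neg, ha])
  | one => exact ⟨1, one_mem _, one_mul 1⟩
  | mul g h _ _ hg hh =>
    obtain ⟨g', hg', hg'g⟩ := hg
    obtain ⟨h', hh', hh'h⟩ := hh
    refine ⟨h' * g', mul_mem hh' hg', ?_⟩
    rw [Matrix.mul_assoc, ← Matrix.mul_assoc g', hg'g, Matrix.one_mul, hh'h]

lemma map_mem_eichlerSubmonoid {S : Type*} [CommRing S] (f : R →+* S)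
    (hg : g ∈ eichlerSubmonoid M) : g.map f ∈ eichlerSubmonoid (M.map f) := by
  induction hg using Submonoid.closure_induction with
  | mem g hg =>
    obtain ⟨e, a, q, he, hea, ha, rfl⟩ := hg
    refine Submonoid.subset_closure
      ⟨f ∘ e, f ∘ a, f q, ?_, ?_, ?_, (map_eichlerTransvection f M e a q).symm⟩
    · rw [← RingHom.map_dotProduct_mulVec, he, map_zero]
    · rw [← RingHom.map_dotProduct_mulVec, hea, map_zero]
    · rw [← RingHom.map_dotProduct_mulVec, ha, map_mul, map_ofNat]
  | one => simp [one_mem]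
  | mul g h _ _ hg hh => simpa [Matrix.map_mul] using mul_mem hg hh

def EichlerRel (M : Matrix ι ι R) (v w : ι → R) : Prop :=
  ∃ g ∈ eichlerSubmonoid M, g *ᵥ v = w

namespace EichlerRel

variable {u v w : ι → R}

lemma refl (v : ι → R) : EichlerRel M v v := ⟨1, one_mem _, one_mulVec v⟩

lemma trans (h₁ : EichlerRel M u v) (h₂ : EichlerRel M v w) : EichlerRel M u w := by
  obtain ⟨g₁, hg₁, rfl⟩ := h₁
  obtain ⟨g₂, hg₂, rfl⟩ := h₂
  exact ⟨g₂ * g₁, mul_mem hg₂ hg₁, (mulVec_mulVec _ _ _).symm⟩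

lemma symm (hM : M.IsSymm) (h : EichlerRel M v w) : EichlerRel M w v := by
  obtain ⟨g, hg, rfl⟩ := h
  obtain ⟨h, hh, hhg⟩ := exists_mul_eq_one_of_mem_eichlerSubmonoid hM hg
  exact ⟨h, hh, by rw [mulVec_mulVec, hhg, one_mulVec]⟩

lemma form_eq (hM : M.IsSymm) (h : EichlerRel M v w) : w ⬝ᵥ (M *ᵥ w) = v ⬝ᵥ (M *ᵥ v) := by
  obtain ⟨g, hg, rfl⟩ := h
  rw [← dotProduct_transpose_mul_mul_mulVec, eichlerSubmonoid_le_isometrySubmonoid hM hg]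

lemma range_form_eq (hM : M.IsSymm) (h : EichlerRel M v w) :
    Set.range (fun x => w ⬝ᵥ (M *ᵥ x)) = Set.range (fun x => v ⬝ᵥ (M *ᵥ x)) := by
  suffices key : ∀ {v w}, EichlerRel M v w →
      Set.range (fun x => w ⬝ᵥ (M *ᵥ x)) ⊆ Set.range (fun x => v ⬝ᵥ (M *ᵥ x)) from
    (key h).antisymm (key (h.symm hM))
  rintro v w ⟨g, hg, rfl⟩ _ ⟨x, rfl⟩
  obtain ⟨h, hh, hhg⟩ := exists_mul_eq_one_of_mem_eichlerSubmonoid hM hg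
  refine ⟨h *ᵥ x, ?_⟩
  calc v ⬝ᵥ (M *ᵥ (h *ᵥ x)) = v ⬝ᵥ ((gᵀ * M * g) *ᵥ (h *ᵥ x)) := by
        rw [eichlerSubmonoid_le_isometrySubmonoid hM hg]
    _ = (g *ᵥ v) ⬝ᵥ (M *ᵥ x) := by
        rw [dotProduct_transpose_mul_mul_mulVec, mulVec_mulVec x g h, mul_eq_one_comm.1 hhg,
          one_mulVec]

lemma transvection (hM : M.IsSymm) {e a : ι → R} {q : R} (he : e ⬝ᵥ (M *ᵥ e) = 0)
    (hea : e ⬝ᵥ (M *ᵥ a) = 0) (ha : a ⬝ᵥ (M *ᵥ a) = 2 * q) (v : ι → R) :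
    EichlerRel M v (v + (e ⬝ᵥ (M *ᵥ v)) • a - (a ⬝ᵥ (M *ᵥ v) + q * e ⬝ᵥ (M *ᵥ v)) • e) :=
  ⟨_, Submonoid.subset_closure ⟨e, a, q, he, hea, ha, rfl⟩, eichlerTransvection_mulVec hM v⟩

lemma sub_smul_of_form_eq_zero (hM : M.IsSymm) {e a : ι → R} {q : R} (he : e ⬝ᵥ (M *ᵥ e) = 0)
    (hea : e ⬝ᵥ (M *ᵥ a) = 0) (ha : a ⬝ᵥ (M *ᵥ a) = 2 * q) (hev : e ⬝ᵥ (M *ᵥ v) = 0) :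
    EichlerRel M v (v - (a ⬝ᵥ (M *ᵥ v)) • e) := by
  simpa [hev] using transvection hM he hea ha v

end EichlerRel

end EichlerSubmonoid

lemma castVec_add {ι : Type*} (y z : ι → ℤ) : castVec (y + z) = castVec y + castVec z := by
  ext i
  simp [castVec]

section DualLattice

variable {ι : Type*} [Fintype ι] {M : Matrix ι ι ℤ}

def IsDualVec (M : Matrix ι ι ℤ) (x : ι → ℚ) : Prop :=
  ∀ y : ι → ℤ, ∃ k : ℤ, bilinQ M x (castVec y) = k

lemma isDualVec_castVec (M : Matrix ι ι ℤ) (z : ι → ℤ) : IsDualVec M (castVec z) :=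
  fun y => ⟨z ⬝ᵥ (M *ᵥ y), by simp [bilinQ, castVec, dotProduct, mulVec]⟩

lemma IsDualVec.add {x y : ι → ℚ} (hx : IsDualVec M x) (hy : IsDualVec M y) :
    IsDualVec M (x + y) := by
  intro z
  obtain ⟨k, hk⟩ := hx z
  obtain ⟨l, hl⟩ := hy z
  exact ⟨k + l, by simp only [bilinQ, add_dotProduct] at hk hl ⊢; push_cast; rw [hk, hl]⟩

variable [DecidableEq ι] {g : Matrix ι ι ℤ}

lemma exists_mulVec_sub_eq_castVec_of_mem_eichlerSubmonoid (hM : M.IsSymm)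
    (hg : g ∈ eichlerSubmonoid M) {x : ι → ℚ} (hx : IsDualVec M x) :
    ∃ z : ι → ℤ, g.map (Int.cast : ℤ → ℚ) *ᵥ x - x = castVec z := by
  induction hg using Submonoid.closure_induction generalizing x with
  | mem g hg =>
    obtain ⟨e, a, q, -, -, -, rfl⟩ := hg
    obtain ⟨k, hk⟩ := hx e
    obtain ⟨l, hl⟩ := hx a
    have hMQ : (M.map (Int.cast : ℤ → ℚ)).IsSymm := hM.map _
    refine ⟨k • a - (l + q * k) • e, ?_⟩
    have hT := map_eichlerTransvection (Int.castRingHom ℚ) M e a q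
    simp only [Int.coe_castRingHom] at hT
    rw [hT, eichlerTransvection_mulVec hMQ, hMQ.dotProduct_mulVec_comm _ x,
      hMQ.dotProduct_mulVec_comm _ x]
    have hk' : x ⬝ᵥ (M.map Int.cast *ᵥ fun i => (e i : ℚ)) = k := hk
    have hl' : x ⬝ᵥ (M.map Int.cast *ᵥ fun i => (a i : ℚ)) = l := hl
    ext i
    simp [castVec, Function.comp_def, hk', hl']
    ring
  | one => exact ⟨0, by ext; simp [castVec]⟩
  | mul g h _ _ hg hh =>
    obtain ⟨z₁, hz₁⟩ := hh hx
    have hhx : h.map (Int.cast : ℤ → ℚ) *ᵥ x = x + castVec z₁ := by rw [← hz₁]; abel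
    obtain ⟨z₂, hz₂⟩ := hg (hhx ▸ hx.add (isDualVec_castVec M z₁))
    refine ⟨z₂ + z₁, ?_⟩
    have hmul : (g * h).map (Int.cast : ℤ → ℚ) = g.map Int.cast * h.map Int.cast :=
      Matrix.map_mul (f := Int.castRingHom ℚ)
    rw [castVec_add, ← hz₂, ← hz₁, hmul, ← mulVec_mulVec]
    abel

end DualLattice

lemma JoinedIn.pos_of_pos {X : Type*} [TopologicalSpace X] {F : Set X} {x y : X}
    (h : JoinedIn F x y) {f : X → ℝ} (hf : Continuous f) (hF : ∀ z ∈ F, f z ≠ 0)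
    (hx : 0 < f x) : 0 < f y := by
  by_contra hy
  obtain ⟨t, ht⟩ := intermediate_value_univ 1 0 (hf.comp h.somePath.continuous)
    ⟨by simpa using not_lt.1 hy, by simpa using hx.le⟩
  exact hF _ (h.somePath_mem t) ht

section RealPaths

variable {ι : Type*} [Fintype ι] [DecidableEq ι] {M : Matrix ι ι ℝ}

lemma joinedIn_one_eichlerTransvection {e a : ι → ℝ} {q : ℝ} (hM : M.IsSymm)
    (he : e ⬝ᵥ (M *ᵥ e) = 0) (hea : e ⬝ᵥ (M *ᵥ a) = 0) (ha : a ⬝ᵥ (M *ᵥ a) = 2 * q) :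
    JoinedIn (isometrySubmonoid M) 1 (eichlerTransvection M e a q) := by
  have hpath : ∀ t : ℝ, eichlerTransvection M e (t • a) (t ^ 2 * q) =
      1 + t • (vecMulVec a (M *ᵥ e) - vecMulVec e (M *ᵥ a)) -
        (t ^ 2 * q) • vecMulVec e (M *ᵥ e) := fun t => by
    simp only [eichlerTransvection, mulVec_smul, smul_vecMulVec, vecMulVec_smul, smul_sub]
    abel
  refine ⟨⟨⟨fun t => eichlerTransvection M e ((t : ℝ) • a) ((t : ℝ) ^ 2 * q), ?_⟩, ?_, ?_⟩,
    fun t => transpose_mul_mul_eichlerTransvection hM he ?_ ?_⟩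
  · simp only [hpath]
    fun_prop
  · simp [eichlerTransvection_zero]
  · simp
  · simp [mulVec_smul, hea]
  · simp [mulVec_smul, ha]
    ring

lemma joinedIn_one_of_mem_eichlerSubmonoid {g : Matrix ι ι ℝ} (hM : M.IsSymm)
    (hg : g ∈ eichlerSubmonoid M) : JoinedIn (isometrySubmonoid M) 1 g := by
  induction hg using Submonoid.closure_induction with
  | mem g hg =>
    obtain ⟨e, a, q, he, hea, ha, rfl⟩ := hg
    exact joinedIn_one_eichlerTransvection hM he hea ha
  | one => exact JoinedIn.refl (one_mem _)
  | mul g h _ _ hg hh =>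
    simpa using (hg.mul hh).mono (Set.mul_subset_iff.2 fun _ hA _ hB => mul_mem hA hB)

end RealPaths

section Orientation

variable {ι : Type*} [Fintype ι] {M : Matrix ι ι ℤ}

lemma bilinR_comm (hM : M.IsSymm) (x y : ι → ℝ) : bilinR M x y = bilinR M y x :=
  (hM.map _).dotProduct_mulVec_comm x y

lemma bilinR_sum_smul {k : ℕ} (w : Fin k → ι → ℝ) (c : Fin k → ℝ) :
    bilinR M (∑ i, c i • w i) (∑ i, c i • w i) =
      c ⬝ᵥ ((of fun i j => bilinR M (w i) (w j)) *ᵥ c) := by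
  change _ = ∑ i, c i * ∑ j, bilinR M (w i) (w j) * c j
  simp only [bilinR, mulVec_sum, mulVec_smul, sum_dotProduct, dotProduct_sum, smul_dotProduct,
    dotProduct_smul, smul_eq_mul, Finset.mul_sum]
  rw [Finset.sum_comm]
  exact Finset.sum_congr rfl fun i _ => Finset.sum_congr rfl fun j _ => by ring

variable [DecidableEq ι]

lemma bilinR_eq_toLinearMap₂' (x y : ι → ℝ) :
    bilinR M x y = toLinearMap₂' ℝ (M.map Int.cast) x y :=
  (toLinearMap₂'_apply' _ _ _).symm

lemma posDef_gram_snoc (hM : M.IsSymm) {k : ℕ} {w : Fin k → ι → ℝ} {u : ι → ℝ}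
    (hw : (of fun i j => bilinR M (w i) (w j)).PosDef) (hu : ∀ i, bilinR M (w i) u = 0)
    (huu : 0 < bilinR M u u) :
    (of fun i j => bilinR M (Fin.snoc (α := fun _ => ι → ℝ) w u i)
      (Fin.snoc (α := fun _ => ι → ℝ) w u j)).PosDef := by
  refine .of_dotProduct_mulVec_pos ?_ fun x hx => ?_
  · ext i j
    exact bilinR_comm hM _ _
  set y : Fin k → ℝ := fun i => x i.castSucc
  set s := ∑ i, y i • w i
  have hsu : bilinR M s u = 0 := by
    rw [bilinR_eq_toLinearMap₂']
    simp only [s, map_sum, map_smul, LinearMap.sum_apply, LinearMap.smul_apply]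
    simp [← bilinR_eq_toLinearMap₂', hu]
  have hsplit : ∑ i, x i • Fin.snoc (α := fun _ => ι → ℝ) w u i = s + x (Fin.last k) • u := by
    simp [Fin.sum_univ_castSucc, s, y]
  have hexp : bilinR M (s + x (Fin.last k) • u) (s + x (Fin.last k) • u) =
      y ⬝ᵥ ((of fun i j => bilinR M (w i) (w j)) *ᵥ y) + x (Fin.last k) ^ 2 * bilinR M u u := by
    rw [← bilinR_sum_smul, bilinR_eq_toLinearMap₂']
    simp only [map_add, map_smul, LinearMap.add_apply, LinearMap.smul_apply, smul_eq_mul]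
    simp only [← bilinR_eq_toLinearMap₂']
    rw [bilinR_comm hM u s, hsu]
    ring
  rw [star_trivial, ← bilinR_sum_smul, hsplit, hexp]
  by_cases hy : y = 0
  · have hlast : x (Fin.last k) ≠ 0 := fun h0 =>
      hx (funext fun i => Fin.lastCases h0 (fun j => congrFun hy j) i)
    rw [hy, zero_dotProduct, zero_add]
    positivity
  · have := hw.dotProduct_mulVec_pos hy
    rw [star_trivial] at this
    positivity

/-- A kernel vector `c` would give `u = ∑ cⱼ wⱼ` with `A u ⊥ W` and `(A u, A u) = (u, u) > 0`,
so `W + ℝ A u` would be a larger positive definite subspace. -/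
lemma IsMaxPosTuple.det_ne_zero (hM : M.IsSymm) {k : ℕ} {w : Fin k → ι → ℝ}
    (hw : IsMaxPosTuple M w) {A : Matrix ι ι ℝ}
    (hA : A ∈ isometrySubmonoid (M.map (Int.cast : ℤ → ℝ))) :
    (of fun i j => bilinR M (w i) (A *ᵥ w j)).det ≠ 0 := by
  intro hdet
  obtain ⟨c, hc0, hc⟩ := exists_mulVec_eq_zero_iff.2 hdet
  set u := ∑ j, c j • w j
  have horth : ∀ i, bilinR M (w i) (A *ᵥ u) = 0 := fun i => by
    have hci := congrFun hc i
    rw [Pi.zero_apply] at hci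
    rw [← hci, bilinR_eq_toLinearMap₂']
    simp only [u, mulVec_sum, mulVec_smul, map_sum, map_smul, smul_eq_mul]
    simp [← bilinR_eq_toLinearMap₂', mulVec, dotProduct, mul_comm]
  have hnorm : bilinR M (A *ᵥ u) (A *ᵥ u) = bilinR M u u := by
    rw [bilinR, bilinR, ← dotProduct_transpose_mul_mul_mulVec, hA]
  have hpos : 0 < bilinR M u u := by
    have := hw.1.dotProduct_mulVec_pos hc0
    rwa [star_trivial, ← bilinR_sum_smul] at this
  exact hw.2 _ (posDef_gram_snoc hM hw.1 horth (hnorm ▸ hpos))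

lemma orientPres_of_joinedIn (hM : M.IsSymm) {g : Matrix ι ι ℤ}
    (hg : JoinedIn (isometrySubmonoid (M.map (Int.cast : ℤ → ℝ)) : Set (Matrix ι ι ℝ)) 1
      (g.map Int.cast)) :
    OrientPres M g := by
  intro k w hw
  refine hg.pos_of_pos (f := fun A => (of fun i j => bilinR M (w i) (A *ᵥ w j)).det) ?_
    (fun A hA => hw.det_ne_zero hM hA) (by simpa using hw.1.det_pos)
  unfold bilinR
  fun_prop

end Orientation

namespace U2Sum

variable {n : ℕ} {M' : Matrix (Fin n) (Fin n) ℤ}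

/-- The vector `a₁ e₁ + b₁ f₁ + a₂ e₂ + b₂ f₂ + z` of `U² ⊕ L'`. -/
def vec (a₁ b₁ a₂ b₂ : ℤ) (z : Fin n → ℤ) : Fin 4 ⊕ Fin n → ℤ :=
  Sum.elim ![a₁, b₁, a₂, b₂] z

lemma vec_eta (x : Fin 4 ⊕ Fin n → ℤ) :
    vec (x (.inl 0)) (x (.inl 1)) (x (.inl 2)) (x (.inl 3)) (fun i => x (.inr i)) = x := by
  ext (i | i)
  · fin_cases i <;> rfl
  · rfl

@[simp]
lemma vec_add (a₁ b₁ a₂ b₂ c₁ d₁ c₂ d₂ : ℤ) (z y : Fin n → ℤ) :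
    vec a₁ b₁ a₂ b₂ z + vec c₁ d₁ c₂ d₂ y =
      vec (a₁ + c₁) (b₁ + d₁) (a₂ + c₂) (b₂ + d₂) (z + y) := by
  ext (i | i)
  · fin_cases i <;> rfl
  · rfl

@[simp]
lemma vec_sub (a₁ b₁ a₂ b₂ c₁ d₁ c₂ d₂ : ℤ) (z y : Fin n → ℤ) :
    vec a₁ b₁ a₂ b₂ z - vec c₁ d₁ c₂ d₂ y =
      vec (a₁ - c₁) (b₁ - d₁) (a₂ - c₂) (b₂ - d₂) (z - y) := by
  ext (i | i)
  · fin_cases i <;> rfl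
  · rfl

@[simp]
lemma smul_vec (k a₁ b₁ a₂ b₂ : ℤ) (z : Fin n → ℤ) :
    k • vec a₁ b₁ a₂ b₂ z = vec (k * a₁) (k * b₁) (k * a₂) (k * b₂) (k • z) := by
  ext (i | i)
  · fin_cases i <;> rfl
  · rfl

lemma form_vec (a₁ b₁ a₂ b₂ c₁ d₁ c₂ d₂ : ℤ) (z y : Fin n → ℤ) :
    vec a₁ b₁ a₂ b₂ z ⬝ᵥ (fromBlocks U2G 0 0 M' *ᵥ vec c₁ d₁ c₂ d₂ y) =
      a₁ * d₁ + b₁ * c₁ + a₂ * d₂ + b₂ * c₂ + z ⬝ᵥ (M' *ᵥ y) := by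
  simp [vec, U2G, dotProduct, mulVec, Fin.sum_univ_four]

lemma isSymm_fromBlocks_U2G (hsymm : M'ᵀ = M') : (fromBlocks U2G 0 0 M').IsSymm :=
  .fromBlocks (by decide) (by simp) hsymm

lemma exists_form_self_eq_two_mul (heven : ∀ v : Fin n → ℤ, ∃ k : ℤ, v ⬝ᵥ (M' *ᵥ v) = 2 * k)
    (x : Fin 4 ⊕ Fin n → ℤ) : ∃ q, x ⬝ᵥ (fromBlocks U2G 0 0 M' *ᵥ x) = 2 * q := by
  obtain ⟨k, hk⟩ := heven fun i => x (.inr i)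
  refine ⟨x (.inl 0) * x (.inl 1) + x (.inl 2) * x (.inl 3) + k, ?_⟩
  conv_lhs => rw [← vec_eta x]
  rw [form_vec, hk]
  ring

section Shears

variable (hsymm : M'ᵀ = M') (a₁ b₁ a₂ b₂ : ℤ) (z : Fin n → ℤ)
include hsymm

/- `rel_x_y k` is the Eichler transvection with `e = x` and `a = k y`. -/

lemma rel_e₂_f₁ (k : ℤ) : EichlerRel (fromBlocks U2G 0 0 M') (vec a₁ b₁ a₂ b₂ z)
    (vec a₁ (b₁ + k * b₂) (a₂ - k * a₁) b₂ z) := by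
  convert EichlerRel.transvection (isSymm_fromBlocks_U2G hsymm) (e := vec 0 0 1 0 0)
    (a := vec 0 k 0 0 0) (q := 0) (by simp [form_vec]) (by simp [form_vec]) (by simp [form_vec])
    (vec a₁ b₁ a₂ b₂ z) using 1
  simp only [form_vec, smul_vec, vec_add, vec_sub, zero_dotProduct, smul_zero, add_zero, sub_zero]
  congr 1 <;> ring

lemma rel_e₂_e₁ (k : ℤ) : EichlerRel (fromBlocks U2G 0 0 M') (vec a₁ b₁ a₂ b₂ z)
    (vec (a₁ + k * b₂) b₁ (a₂ - k * b₁) b₂ z) := by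
  convert EichlerRel.transvection (isSymm_fromBlocks_U2G hsymm) (e := vec 0 0 1 0 0)
    (a := vec k 0 0 0 0) (q := 0) (by simp [form_vec]) (by simp [form_vec]) (by simp [form_vec])
    (vec a₁ b₁ a₂ b₂ z) using 1
  simp only [form_vec, smul_vec, vec_add, vec_sub, zero_dotProduct, smul_zero, add_zero, sub_zero]
  congr 1 <;> ring

lemma rel_f₂_e₁ (k : ℤ) : EichlerRel (fromBlocks U2G 0 0 M') (vec a₁ b₁ a₂ b₂ z)
    (vec (a₁ + k * a₂) b₁ a₂ (b₂ - k * b₁) z) := by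
  convert EichlerRel.transvection (isSymm_fromBlocks_U2G hsymm) (e := vec 0 0 0 1 0)
    (a := vec k 0 0 0 0) (q := 0) (by simp [form_vec]) (by simp [form_vec]) (by simp [form_vec])
    (vec a₁ b₁ a₂ b₂ z) using 1
  simp only [form_vec, smul_vec, vec_add, vec_sub, zero_dotProduct, smul_zero, add_zero, sub_zero]
  congr 1 <;> ring

lemma rel_f₂_f₁ (k : ℤ) : EichlerRel (fromBlocks U2G 0 0 M') (vec a₁ b₁ a₂ b₂ z)
    (vec a₁ (b₁ + k * a₂) a₂ (b₂ - k * a₁) z) := by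
  convert EichlerRel.transvection (isSymm_fromBlocks_U2G hsymm) (e := vec 0 0 0 1 0)
    (a := vec 0 k 0 0 0) (q := 0) (by simp [form_vec]) (by simp [form_vec]) (by simp [form_vec])
    (vec a₁ b₁ a₂ b₂ z) using 1
  simp only [form_vec, smul_vec, vec_add, vec_sub, zero_dotProduct, smul_zero, add_zero, sub_zero]
  congr 1 <;> ring

lemma rel_swap_planes : EichlerRel (fromBlocks U2G 0 0 M') (vec a₁ b₁ a₂ b₂ z)
    (vec a₂ b₂ (-a₁) (-b₁) z) := by
  convert ((rel_f₂_e₁ hsymm _ _ _ _ z 1).trans (rel_e₂_f₁ hsymm _ _ _ _ z 1)).trans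
    (rel_f₂_e₁ hsymm _ _ _ _ z 1) using 2 <;> ring

lemma rel_swap_planes_flip : EichlerRel (fromBlocks U2G 0 0 M') (vec a₁ b₁ a₂ b₂ z)
    (vec b₂ a₂ (-b₁) (-a₁) z) := by
  convert ((rel_e₂_e₁ hsymm _ _ _ _ z 1).trans (rel_f₂_f₁ hsymm _ _ _ _ z 1)).trans
    (rel_e₂_e₁ hsymm _ _ _ _ z 1) using 2 <;> ring

lemma exists_rel_emod : ∃ b₁', EichlerRel (fromBlocks U2G 0 0 M') (vec a₁ b₁ a₂ b₂ z)
    (vec a₁ b₁' (a₂ % a₁) (b₂ % a₁) z) := by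
  have h := (rel_e₂_f₁ hsymm a₁ b₁ a₂ b₂ z (a₂ / a₁)).trans (rel_f₂_f₁ hsymm _ _ _ b₂ z (b₂ / a₁))
  have hmod : ∀ c, c - c / a₁ * a₁ = c % a₁ := fun c => by rw [Int.emod_def]; ring
  simp only [hmod] at h
  exact ⟨_, h⟩

end Shears

/-- Smith normal form of the `U²`-part, viewed as the matrix `[[a₁, a₂], [b₂, -b₁]]` on which the
shears act by elementary row and column operations. -/
lemma exists_rel_diag (hsymm : M'ᵀ = M') (a₁ b₁ a₂ b₂ : ℤ) (z : Fin n → ℤ) :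
    ∃ g m, EichlerRel (fromBlocks U2G 0 0 M') (vec a₁ b₁ a₂ b₂ z) (vec g m 0 0 z) := by
  induction hN : max a₂.natAbs b₂.natAbs using Nat.strong_induction_on generalizing a₁ b₁ a₂ b₂
    with | _ N ih =>
  by_cases h0 : a₂ = 0 ∧ b₂ = 0
  · obtain ⟨rfl, rfl⟩ := h0
    exact ⟨a₁, b₁, .refl _⟩
  obtain ⟨c, b₁', a₂', b₂', hc, hcN, hswap⟩ : ∃ c b₁' a₂' b₂', c ≠ 0 ∧ c.natAbs ≤ N ∧
      EichlerRel (fromBlocks U2G 0 0 M') (vec a₁ b₁ a₂ b₂ z) (vec c b₁' a₂' b₂' z) := by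
    by_cases ha₂ : a₂ = 0
    · exact ⟨b₂, a₂, -b₁, -a₁, by tauto, by omega, rel_swap_planes_flip hsymm _ _ _ _ z⟩
    · exact ⟨a₂, b₂, -a₁, -b₁, ha₂, by omega, rel_swap_planes hsymm _ _ _ _ z⟩
  obtain ⟨b₁'', hmod⟩ := exists_rel_emod hsymm c b₁' a₂' b₂' z
  have hlt : max (a₂' % c).natAbs (b₂' % c).natAbs < N := by
    have := Int.emod_lt a₂' hc
    have := Int.emod_lt b₂' hc
    have := Int.emod_nonneg a₂' hc
    have := Int.emod_nonneg b₂' hc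
    omega
  obtain ⟨g, m, hgm⟩ := ih _ hlt c b₁'' (a₂' % c) (b₂' % c) rfl
  exact ⟨g, m, hswap.trans (hmod.trans hgm)⟩

lemma rel_clear_first_plane (hsymm : M'ᵀ = M') {g m d b : ℤ} (hg : d ∣ g) (hm : d ∣ m)
    (z : Fin n → ℤ) :
    EichlerRel (fromBlocks U2G 0 0 M') (vec g m d b z) (vec 0 0 d (b + g / d * m) z) := by
  convert (rel_f₂_e₁ hsymm g m d b z (-(g / d))).trans (rel_f₂_f₁ hsymm _ m d _ z (-(m / d)))
    using 2
  · rw [neg_mul, Int.ediv_mul_cancel hg, add_neg_cancel]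
  · rw [neg_mul, Int.ediv_mul_cancel hm, add_neg_cancel]
  · simp only [neg_mul, Int.ediv_mul_cancel hg, add_neg_cancel]
    ring

section Canonical

variable (hsymm : M'ᵀ = M') (heven : ∀ v : Fin n → ℤ, ∃ k : ℤ, v ⬝ᵥ (M' *ᵥ v) = 2 * k)
include hsymm heven

/-- With `b₂ = 0` the transvections with `e = e₂` only move `a₂`, by any value of `(v, ·)`. -/
lemma rel_vec_zero_zero_of_mem_range {g m d : ℤ} {z : Fin n → ℤ}
    (hmem : ∃ x, vec g m 0 0 z ⬝ᵥ (fromBlocks U2G 0 0 M' *ᵥ x) = d) :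
    EichlerRel (fromBlocks U2G 0 0 M') (vec g m 0 0 z) (vec g m d 0 z) := by
  obtain ⟨x, hx⟩ := hmem
  rw [← vec_eta x, form_vec] at hx
  set c := vec (-x (.inl 0)) (-x (.inl 1)) 0 0 (-fun i => x (.inr i))
  obtain ⟨q, hq⟩ := exists_form_self_eq_two_mul heven c
  convert EichlerRel.sub_smul_of_form_eq_zero (isSymm_fromBlocks_U2G hsymm)
    (v := vec g m 0 0 z) (e := vec 0 0 1 0 0) (a := c) (by simp [form_vec])
    (by simp [c, form_vec]) hq (by simp [form_vec]) using 1
  simp only [c, form_vec, smul_vec, vec_sub, neg_dotProduct]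
  congr 1
  · ring
  · ring
  · rw [← hx, (show M'.IsSymm from hsymm).dotProduct_mulVec_comm z]
    ring
  · ring
  · simp

lemma exists_rel_add_smul (a₁ b₁ a₂ b₂ : ℤ) (z y : Fin n → ℤ) :
    ∃ b, EichlerRel (fromBlocks U2G 0 0 M') (vec a₁ b₁ a₂ b₂ z) (vec a₁ b₁ a₂ b (z + a₂ • y)) := by
  obtain ⟨q, hq⟩ := exists_form_self_eq_two_mul heven (vec 0 0 0 0 y)
  refine ⟨b₂ - (y ⬝ᵥ (M' *ᵥ z) + q * a₂), ?_⟩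
  convert EichlerRel.transvection (isSymm_fromBlocks_U2G hsymm) (e := vec 0 0 0 1 0)
    (a := vec 0 0 0 0 y) (by simp [form_vec]) (by simp [form_vec]) hq (vec a₁ b₁ a₂ b₂ z) using 1
  simp only [form_vec, smul_vec, vec_add, vec_sub, zero_dotProduct]
  congr 1 <;> ring

lemma exists_rel_canonical {v : Fin 4 ⊕ Fin n → ℤ} {d : ℤ}
    (hdvd : ∀ x, d ∣ v ⬝ᵥ (fromBlocks U2G 0 0 M' *ᵥ x))
    (hmem : ∃ x, v ⬝ᵥ (fromBlocks U2G 0 0 M' *ᵥ x) = d) :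
    ∃ B, EichlerRel (fromBlocks U2G 0 0 M') v (vec 0 0 d B fun i => v (.inr i) % d) := by
  set z : Fin n → ℤ := fun i => v (.inr i)
  obtain ⟨g, m, hdiag⟩ :=
    exists_rel_diag hsymm (v (.inl 0)) (v (.inl 1)) (v (.inl 2)) (v (.inl 3)) z
  rw [vec_eta] at hdiag
  have hrange := hdiag.range_form_eq (isSymm_fromBlocks_U2G hsymm)
  have hdvd' : ∀ x, d ∣ vec g m 0 0 z ⬝ᵥ (fromBlocks U2G 0 0 M' *ᵥ x) := fun x => by
    obtain ⟨y, hy⟩ := hrange.le ⟨x, rfl⟩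
    dsimp only at hy
    rw [← hy]
    exact hdvd y
  have hmem' : d ∈ Set.range fun x => vec g m 0 0 z ⬝ᵥ (fromBlocks U2G 0 0 M' *ᵥ x) := by
    rw [hrange]
    exact hmem
  have hdg : d ∣ g := by simpa [form_vec] using hdvd' (vec 0 1 0 0 0)
  have hdm : d ∣ m := by simpa [form_vec] using hdvd' (vec 1 0 0 0 0)
  obtain ⟨B, hz⟩ := exists_rel_add_smul hsymm heven 0 0 d (0 + g / d * m) z fun i => -(z i / d)
  have hemod : z + d • (fun i => -(z i / d)) = fun i => z i % d := by
    ext i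
    simp [Int.emod_def]
    ring
  exact ⟨B, hdiag.trans <| (rel_vec_zero_zero_of_mem_range hsymm heven hmem').trans <|
    (rel_clear_first_plane hsymm hdg hdm z).trans (hemod ▸ hz)⟩

end Canonical

end U2Sum

lemma IsPrimitiveVec.dvd_of_forall_dvd_mul {ι : Type*} {v : ι → ℤ} (hv : IsPrimitiveVec v)
    {a b : ℤ} (h : ∀ i, a ∣ b * v i) : a ∣ b := by
  rcases (Int.gcd a b).eq_zero_or_pos with h0 | hpos
  · rw [(Int.gcd_eq_zero_iff.1 h0).2]
    exact dvd_zero a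
  obtain ⟨g, a', b', hg, hcop, rfl, rfl⟩ := Int.exists_gcd_one' hpos
  have hg' : (g : ℤ) ≠ 0 := by positivity
  have ha' : ∀ i, a' ∣ v i := fun i =>
    Int.dvd_of_dvd_mul_right_of_gcd_one
      ((mul_dvd_mul_iff_right hg').1 (by simpa [mul_right_comm] using h i)) hcop
  have hunit : IsUnit a' := hv a' (fun i => v i / a')
    (funext fun i => (Int.mul_ediv_cancel' (ha' i)).symm)
  exact mul_dvd_mul_right hunit.dvd _

lemma eq_of_isPrimitiveVec_of_smul_sub_smul {ι : Type*} {v w u : ι → ℤ} {dv dw : ℤ}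
    (hv : IsPrimitiveVec v) (hw : IsPrimitiveVec w) (hdv : 0 ≤ dv) (hdw : 0 ≤ dw)
    (hu : dw • v - dv • w = (dv * dw) • u) : dv = dw := by
  have hi : ∀ i, dw * v i - dv * w i = dv * dw * u i := fun i => by
    simpa using congrFun hu i
  refine Int.dvd_antisymm hdv hdw (hv.dvd_of_forall_dvd_mul fun i => ?_)
    (hw.dvd_of_forall_dvd_mul fun i => ?_)
  · exact ⟨w i + dw * u i, by linear_combination hi i⟩
  · exact ⟨v i - dv * u i, by linear_combination -hi i⟩

theorem stmt_3_general (n : ℕ) (M' : Matrix (Fin n) (Fin n) ℤ)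
    (hsymm : M'ᵀ = M')
    (heven : ∀ v : Fin n → ℤ, ∃ k : ℤ, v ⬝ᵥ (M' *ᵥ v) = 2 * k)
    (v w : (Fin 4 ⊕ Fin n) → ℤ)
    (hvprim : IsPrimitiveVec v) (hwprim : IsPrimitiveVec w)
    -- `(v,v) = (w,w)`:
    (hsq : v ⬝ᵥ ((Matrix.fromBlocks U2G 0 0 M') *ᵥ v) =
      w ⬝ᵥ ((Matrix.fromBlocks U2G 0 0 M') *ᵥ w))
    -- `dv` and `dw` are the divisibilities of `v` and `w`: the positive generators of
    -- the ideals `(v, L)` and `(w, L)` of `ℤ`: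
    (dv dw : ℤ) (hdv : 0 < dv) (hdw : 0 < dw)
    (hdvdvd : ∀ x : (Fin 4 ⊕ Fin n) → ℤ, dv ∣ v ⬝ᵥ ((Matrix.fromBlocks U2G 0 0 M') *ᵥ x))
    (hdvmem : ∃ x : (Fin 4 ⊕ Fin n) → ℤ, v ⬝ᵥ ((Matrix.fromBlocks U2G 0 0 M') *ᵥ x) = dv)
    (hdwdvd : ∀ x : (Fin 4 ⊕ Fin n) → ℤ, dw ∣ w ⬝ᵥ ((Matrix.fromBlocks U2G 0 0 M') *ᵥ x))
    (hdwmem : ∃ x : (Fin 4 ⊕ Fin n) → ℤ, w ⬝ᵥ ((Matrix.fromBlocks U2G 0 0 M') *ᵥ x) = dw)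
    -- `[v/div(v)] = [w/div(w)]` in `A_L`, i.e. `v/dv - w/dw ∈ L`:
    (hclass : ∃ u : (Fin 4 ⊕ Fin n) → ℤ, dw • v - dv • w = (dv * dw) • u) :
    ∃ g : Matrix (Fin 4 ⊕ Fin n) (Fin 4 ⊕ Fin n) ℤ,
      IsIsometry (Matrix.fromBlocks U2G 0 0 M') g ∧
      g.det = 1 ∧
      OrientPres (Matrix.fromBlocks U2G 0 0 M') g ∧
      -- `g` acts trivially on the discriminant group `A_L = L^∨/L`:
      (∀ x : (Fin 4 ⊕ Fin n) → ℚ,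
        (∀ y : (Fin 4 ⊕ Fin n) → ℤ, ∃ k : ℤ,
          bilinQ (Matrix.fromBlocks U2G 0 0 M') x (castVec y) = (k : ℚ)) →
        ∃ z : (Fin 4 ⊕ Fin n) → ℤ,
          (g.map (Int.cast : ℤ → ℚ)) *ᵥ x - x = castVec z) ∧
      g *ᵥ v = w := by
  have hG := U2Sum.isSymm_fromBlocks_U2G hsymm
  obtain ⟨u, hu⟩ := hclass
  obtain rfl : dv = dw := eq_of_isPrimitiveVec_of_smul_sub_smul hvprim hwprim hdv.le hdw.le hu
  obtain ⟨B, hv⟩ := U2Sum.exists_rel_canonical hsymm heven hdvdvd hdvmem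
  obtain ⟨B', hw⟩ := U2Sum.exists_rel_canonical hsymm heven hdwdvd hdwmem
  have hz : (fun i => w (.inr i) % dv) = fun i => v (.inr i) % dv := by
    funext i
    have hui : dv * v (.inr i) - dv * w (.inr i) = dv * dv * u (.inr i) := by
      simpa using congrFun hu (.inr i)
    have hwi : dv * w (.inr i) = dv * (v (.inr i) + dv * -u (.inr i)) := by
      linear_combination -hui
    rw [mul_left_cancel₀ hdv.ne' hwi, Int.add_mul_emod_self_left]
  have hB : B' = B := by
    have h := (hw.form_eq hG).trans (hsq.symm.trans (hv.form_eq hG).symm)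
    rw [U2Sum.form_vec, U2Sum.form_vec, hz] at h
    exact mul_left_cancel₀ (by positivity : 2 * dv ≠ 0) (by linarith)
  rw [hz, hB] at hw
  obtain ⟨g, hg, hgv⟩ := hv.trans (hw.symm hG)
  exact ⟨g, eichlerSubmonoid_le_isometrySubmonoid hG hg, det_of_mem_eichlerSubmonoid hG hg,
    orientPres_of_joinedIn hG (joinedIn_one_of_mem_eichlerSubmonoid (hG.map _)
      (map_mem_eichlerSubmonoid (Int.castRingHom ℝ) hg)),
    fun x hx => exists_mulVec_sub_eq_castVec_of_mem_eichlerSubmonoid hG hg hx, hgv⟩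

/-- Eichler's criterion: let `L'` be an even lattice and `L = U² ⊕ L'`. If `v, w ∈ L` are
primitive elements with `(v,v) = (w,w)` and `[v/div(v)] = [w/div(w)]` in the discriminant
group `A_L`, then there is an isometry `g ∈ S̃O⁺(L)` — of determinant `1`, preserving the
orientation of the positive cone, and acting trivially on `A_L` — with `g(v) = w`. -/
theorem stmt_3 (n : ℕ) (M' : Matrix (Fin n) (Fin n) ℤ)
    (hsymm : M'ᵀ = M') (hnd : M'.det ≠ 0)
    (heven : ∀ v : Fin n → ℤ, ∃ k : ℤ, v ⬝ᵥ (M' *ᵥ v) = 2 * k)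
    (v w : (Fin 4 ⊕ Fin n) → ℤ)
    (hvprim : IsPrimitiveVec v) (hwprim : IsPrimitiveVec w)
    -- `(v,v) = (w,w)`:
    (hsq : v ⬝ᵥ ((Matrix.fromBlocks U2G 0 0 M') *ᵥ v) =
      w ⬝ᵥ ((Matrix.fromBlocks U2G 0 0 M') *ᵥ w))
    -- `dv` and `dw` are the divisibilities of `v` and `w`: the positive generators of
    -- the ideals `(v, L)` and `(w, L)` of `ℤ`:
    (dv dw : ℤ) (hdv : 0 < dv) (hdw : 0 < dw)
    (hdvdvd : ∀ x : (Fin 4 ⊕ Fin n) → ℤ, dv ∣ v ⬝ᵥ ((Matrix.fromBlocks U2G 0 0 M') *ᵥ x))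
    (hdvmem : ∃ x : (Fin 4 ⊕ Fin n) → ℤ, v ⬝ᵥ ((Matrix.fromBlocks U2G 0 0 M') *ᵥ x) = dv)
    (hdwdvd : ∀ x : (Fin 4 ⊕ Fin n) → ℤ, dw ∣ w ⬝ᵥ ((Matrix.fromBlocks U2G 0 0 M') *ᵥ x))
    (hdwmem : ∃ x : (Fin 4 ⊕ Fin n) → ℤ, w ⬝ᵥ ((Matrix.fromBlocks U2G 0 0 M') *ᵥ x) = dw)
    -- `[v/div(v)] = [w/div(w)]` in `A_L`, i.e. `v/dv - w/dw ∈ L`: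
    (hclass : ∃ u : (Fin 4 ⊕ Fin n) → ℤ, dw • v - dv • w = (dv * dw) • u) :
    ∃ g : Matrix (Fin 4 ⊕ Fin n) (Fin 4 ⊕ Fin n) ℤ,
      IsIsometry (Matrix.fromBlocks U2G 0 0 M') g ∧
      g.det = 1 ∧
      OrientPres (Matrix.fromBlocks U2G 0 0 M') g ∧
      -- `g` acts trivially on the discriminant group `A_L = L^∨/L`:
      (∀ x : (Fin 4 ⊕ Fin n) → ℚ,
        (∀ y : (Fin 4 ⊕ Fin n) → ℤ, ∃ k : ℤ,
          bilinQ (Matrix.fromBlocks U2G 0 0 M') x (castVec y) = (k : ℚ)) →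
        ∃ z : (Fin 4 ⊕ Fin n) → ℤ,
          (g.map (Int.cast : ℤ → ℚ)) *ᵥ x - x = castVec z) ∧
      g *ᵥ v = w :=
  stmt_3_general n M' hsymm heven v w hvprim hwprim hsq dv dw hdv hdw hdvdvd hdvmem hdwdvd hdwmem
    hclass
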